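/- arXiv:2102.10939 — 2 statements merged into one kernel-verified Lean document; each statement's English description precedes it below -/
import Mathlib

section
/- Monte Carlo amplitude recovery: let $f(t) = \sum_{j=1}^k a_j e^{2\pi i w_j \cdot t}$ on $\mathbb{R}^d$ with $\min_{i \neq j}|w_i - w_j| > \eta$ and $|a_j| \le A$, and let $w^o \in \mathbb{R}^d$ satisfy $|w^o - w_1| \le \rho$. Let $R > 0$ and consider $I = R^{-d} \int_{[0,R]^d} f(t) e^{-2\pi i w^o \cdot t}\, dt$. Then $|I - a_1| \le A\left(2\pi \rho R \sqrt{d} + (k-1) \max_{j \ge 2} \prod_{l=1}^d \min\left(1, \frac{1}{\pi R |(w_j - w^o)_l|}\right)\right)$; in particular if $\rho \le \epsilon^2 \eta /(4\pi \sqrt{d} k R \eta)$ and $R \ge k/\epsilon^2$ with $\max_j |(w_j - w^o)| \ge \eta/2$ for $j \ge 2$, then $|I - a_1| \le O(A\epsilon^2)$. -/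
/-!
Multiplying out, the correlation equals `∑ j, a j * ∏ l, charAvg R (w j l - wo l)`, where
`charAvg R v` is the average of `s ↦ e^{2πivs}` over `[0, R]`. This average has modulus at most
`1`, and at most `1 / (πR|v|)` by its closed form `(e^{2πivR} - 1) / (2πivR)`; this bounds the
terms `j ≠ 0`. Since `|e^{iθ} - 1| ≤ |θ|` it is also within `2π|v|R` of `1`, so by telescoping the
product for `j = 0` is within `2πR ∑ₗ |vₗ|` of `1`, and Cauchy–Schwarz gives `∑ₗ |vₗ| ≤ √d ρ`.
-/

open Finset Complex MeasureTheory
open Real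

theorem setIntegral_univ_pi_prod {ι 𝕜 : Type*} [Fintype ι] [RCLike 𝕜] {E : ι → Type*}
    [∀ i, MeasurableSpace (E i)] (μ : ∀ i, Measure (E i)) [∀ i, SigmaFinite (μ i)]
    (f : ∀ i, E i → 𝕜) (s : ∀ i, Set (E i)) :
    ∫ x in Set.univ.pi s, ∏ i, f i (x i) ∂Measure.pi μ = ∏ i, ∫ x in s i, f i x ∂μ i := by
  rw [Measure.restrict_pi_pi, integral_fintype_prod_eq_prod]

theorem Finset.norm_prod_sub_one_le_sum {ι R : Type*} [SeminormedCommRing R] (s : Finset ι)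
    (f : ι → R) (hf : ∀ i ∈ s, ‖f i‖ ≤ 1) :
    ‖∏ i ∈ s, f i - 1‖ ≤ ∑ i ∈ s, ‖f i - 1‖ := by
  induction s using Finset.cons_induction with
  | empty => simp
  | cons a s ha ih =>
    rw [prod_cons, sum_cons,
      show f a * ∏ i ∈ s, f i - 1 = f a * (∏ i ∈ s, f i - 1) + (f a - 1) by ring]
    calc ‖f a * (∏ i ∈ s, f i - 1) + (f a - 1)‖
        ≤ ‖f a‖ * ‖∏ i ∈ s, f i - 1‖ + ‖f a - 1‖ :=
          norm_add_le_of_le (norm_mul_le _ _) le_rfl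
      _ ≤ 1 * ∑ i ∈ s, ‖f i - 1‖ + ‖f a - 1‖ := by
          gcongr
          · exact hf a (mem_cons_self a s)
          · exact ih fun i hi => hf i (mem_cons_of_mem hi)
      _ = ‖f a - 1‖ + ∑ i ∈ s, ‖f i - 1‖ := by ring

theorem sum_abs_le_sqrt_card_mul_sqrt_sum_sq {ι : Type*} [Fintype ι] (x : ι → ℝ) :
    ∑ i, |x i| ≤ √(Fintype.card ι) * √(∑ i, x i ^ 2) := by
  rw [← Real.sqrt_mul (Nat.cast_nonneg _)]
  refine le_abs_self _ |>.trans (Real.abs_le_sqrt ?_)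
  simpa only [sq_abs, card_univ] using sq_sum_le_card_mul_sum_sq (s := univ) (f := fun i => |x i|)

theorem norm_sum_mul_sub_le {ι 𝕜 : Type*} [Fintype ι] [DecidableEq ι] [SeminormedRing 𝕜]
    (a z : ι → 𝕜) (i : ι) {A B : ℝ} (ha : ∀ j, ‖a j‖ ≤ A) (hz : ∀ j ≠ i, ‖z j‖ ≤ B) :
    ‖∑ j, a j * z j - a i‖ ≤ A * ‖z i - 1‖ + (Fintype.card ι - 1) * (A * B) := by
  have hA : 0 ≤ A := (norm_nonneg _).trans (ha i)
  have hsplit : ∑ j, a j * z j - a i = a i * (z i - 1) + ∑ j ∈ univ.erase i, a j * z j := by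
    rw [← add_sum_erase _ _ (mem_univ i)]
    noncomm_ring
  have hrest : ‖∑ j ∈ univ.erase i, a j * z j‖ ≤ (Fintype.card ι - 1) * (A * B) := by
    refine (norm_sum_le _ _).trans ?_
    refine (sum_le_card_nsmul _ _ (A * B) fun j hj => ?_).trans ?_
    · exact (norm_mul_le _ _).trans
        (mul_le_mul (ha j) (hz j (ne_of_mem_erase hj)) (norm_nonneg _) hA)
    · rw [card_erase_of_mem (mem_univ i), card_univ, nsmul_eq_mul,
        Nat.cast_sub (Fintype.card_pos_iff.mpr ⟨i⟩), Nat.cast_one]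
  rw [hsplit]
  exact norm_add_le_of_le ((norm_mul_le _ _).trans (by gcongr; exact ha i)) hrest

noncomputable def charAvg (R v : ℝ) : ℂ :=
  (R : ℂ)⁻¹ * ∫ s in Set.Icc 0 R, cexp (2 * π * I * v * s)

lemma norm_cexp_two_pi_I_mul (v s : ℝ) : ‖cexp (2 * π * I * v * s)‖ = 1 := by
  rw [Complex.norm_exp]
  simp

lemma norm_charAvg_le_one {R : ℝ} (hR : 0 ≤ R) (v : ℝ) : ‖charAvg R v‖ ≤ 1 := by
  have h := norm_setIntegral_le_of_norm_le_const (μ := volume) (s := Set.Icc 0 R)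
    (f := fun s : ℝ => cexp (2 * π * I * v * s)) (C := 1) measure_Icc_lt_top
    (fun s _ => (norm_cexp_two_pi_I_mul v s).le)
  rw [one_mul, Real.volume_real_Icc_of_le hR, sub_zero] at h
  rw [charAvg, norm_mul, norm_inv, Complex.norm_real, Real.norm_of_nonneg hR]
  calc R⁻¹ * _ ≤ R⁻¹ * R := by gcongr
    _ ≤ 1 := inv_mul_le_one_of_le₀ le_rfl hR

lemma norm_charAvg_le {R v : ℝ} (hR : 0 ≤ R) (hv : v ≠ 0) :
    ‖charAvg R v‖ ≤ 1 / (π * R * |v|) := by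
  have hc : 2 * π * I * v ≠ 0 := by simp [Real.pi_ne_zero, hv]
  have hint : ∫ s in Set.Icc 0 R, cexp (2 * π * I * v * s)
      = (cexp (2 * π * I * v * R) - 1) / (2 * π * I * v) := by
    rw [integral_Icc_eq_integral_Ioc, ← intervalIntegral.integral_of_le hR,
      integral_exp_mul_complex hc]
    simp
  have hnum : ‖cexp (2 * π * I * v * R) - 1‖ ≤ 2 := by
    have h := norm_sub_le (cexp (2 * π * I * v * R)) 1
    rw [norm_cexp_two_pi_I_mul, norm_one] at h
    linarith
  have hden : ‖2 * π * I * (v : ℂ)‖ = 2 * π * |v| := by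
    simp [abs_of_pos Real.pi_pos]
  rw [charAvg, hint, norm_mul, norm_div, hden, norm_inv, Complex.norm_real,
    Real.norm_of_nonneg hR]
  calc R⁻¹ * (‖cexp (2 * π * I * v * R) - 1‖ / (2 * π * |v|))
      ≤ R⁻¹ * (2 / (2 * π * |v|)) := by gcongr
    _ = 1 / (π * R * |v|) := by field_simp

lemma norm_charAvg_sub_one_le {R : ℝ} (hR : 0 < R) (v : ℝ) :
    ‖charAvg R v - 1‖ ≤ 2 * π * |v| * R := by
  have hint : IntegrableOn (fun s : ℝ => cexp (2 * π * I * v * s)) (Set.Icc 0 R) :=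
    (by fun_prop : Continuous fun s : ℝ => cexp (2 * π * I * v * s)).integrableOn_Icc
  have hsub : charAvg R v - 1 =
      (R : ℂ)⁻¹ * ∫ s in Set.Icc 0 R, (cexp (2 * π * I * v * s) - 1) := by
    have hR' : (R : ℂ) ≠ 0 := by exact_mod_cast hR.ne'
    rw [integral_sub hint (integrableOn_const measure_Icc_lt_top.ne), setIntegral_const,
      Real.volume_real_Icc_of_le hR.le, charAvg, sub_zero, real_smul, mul_one, mul_sub,
      inv_mul_cancel₀ hR']
  have hpt : ∀ s ∈ Set.Icc 0 R, ‖cexp (2 * π * I * v * s) - 1‖ ≤ 2 * π * |v| * R := by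
    intro s hs
    have h := norm_exp_I_mul_ofReal_sub_one_le (x := 2 * π * v * s)
    rw [show I * ((2 * π * v * s : ℝ) : ℂ) = 2 * π * I * v * s by push_cast; ring] at h
    refine h.trans ?_
    rw [Real.norm_eq_abs, abs_mul, abs_mul, abs_of_nonneg hs.1,
      abs_of_pos (by positivity : 0 < 2 * π)]
    gcongr
    exact hs.2
  have h := norm_setIntegral_le_of_norm_le_const (μ := volume) measure_Icc_lt_top hpt
  rw [Real.volume_real_Icc_of_le hR.le, sub_zero] at h
  rw [hsub, norm_mul, norm_inv, Complex.norm_real, Real.norm_of_nonneg hR.le]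
  calc R⁻¹ * _ ≤ R⁻¹ * (2 * π * |v| * R * R) := by gcongr
    _ = 2 * π * |v| * R := by field_simp

lemma norm_charAvg_le_damping {R : ℝ} (hR : 0 ≤ R) (v : ℝ) :
    ‖charAvg R v‖ ≤ if v = 0 then 1 else min 1 (1 / (π * R * |v|)) := by
  split_ifs with hv
  · exact norm_charAvg_le_one hR v
  · exact le_min (norm_charAvg_le_one hR v) (norm_charAvg_le hR hv)

theorem norm_prod_charAvg_sub_one_le {ι : Type*} [Fintype ι] {R : ℝ} (hR : 0 < R)
    (v : ι → ℝ) :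
    ‖∏ l, charAvg R (v l) - 1‖ ≤ 2 * π * R * √(Fintype.card ι) * √(∑ l, v l ^ 2) := by
  calc ‖∏ l, charAvg R (v l) - 1‖
      ≤ ∑ l, ‖charAvg R (v l) - 1‖ :=
        norm_prod_sub_one_le_sum _ _ fun l _ => norm_charAvg_le_one hR.le _
    _ ≤ ∑ l, 2 * π * R * |v l| := by
        gcongr with l
        linarith [norm_charAvg_sub_one_le hR (v l)]
    _ = 2 * π * R * ∑ l, |v l| := by rw [mul_sum]
    _ ≤ 2 * π * R * (√(Fintype.card ι) * √(∑ l, v l ^ 2)) := by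
        gcongr
        exact sum_abs_le_sqrt_card_mul_sqrt_sum_sq v
    _ = _ := by ring

theorem boxAverage_prod_cexp {ι : Type*} [Fintype ι] (R : ℝ) (v : ι → ℝ) :
    ((R ^ Fintype.card ι : ℝ) : ℂ)⁻¹ *
        ∫ t in Set.univ.pi (fun _ : ι => Set.Icc 0 R), ∏ l, cexp (2 * π * I * v l * t l) =
      ∏ l, charAvg R (v l) := by
  rw [volume_pi, setIntegral_univ_pi_prod (fun _ => volume)
    (fun l (s : ℝ) => cexp (2 * π * I * v l * s))]
  simp only [charAvg, prod_mul_distrib, prod_const, card_univ, ofReal_pow, inv_pow]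

theorem boxAverage_correlation {ι κ : Type*} [Fintype ι] [Fintype κ] (R : ℝ) (a : κ → ℂ)
    (w : κ → ι → ℝ) (wo : ι → ℝ) :
    ((R ^ Fintype.card ι : ℝ) : ℂ)⁻¹ *
        (∫ t in Set.univ.pi (fun _ : ι => Set.Icc (0:ℝ) R),
          (∑ j, a j * cexp (2 * π * I * (∑ l, w j l * t l))) *
            cexp (-(2 * π * I) * (∑ l, wo l * t l))) =
      ∑ j, a j * ∏ l, charAvg R (w j l - wo l) := by
  have hpt : ∀ t : ι → ℝ,
      (∑ j, a j * cexp (2 * π * I * (∑ l, w j l * t l))) *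
          cexp (-(2 * π * I) * (∑ l, wo l * t l)) =
        ∑ j, a j * ∏ l, cexp (2 * π * I * (w j l - wo l : ℝ) * t l) := by
    intro t
    simp only [sum_mul, mul_assoc, ← Complex.exp_add, ← Complex.exp_sum]
    congr! 3 with j
    push_cast
    simp only [mul_sum, ← sum_add_distrib]
    congr! 1 with l
    ring
  have hint : ∀ j, IntegrableOn (fun t : ι → ℝ =>
      a j * ∏ l, cexp (2 * π * I * (w j l - wo l : ℝ) * t l))
      (Set.univ.pi fun _ => Set.Icc 0 R) := fun j =>
    (by fun_prop : Continuous _).continuousOn.integrableOn_compact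
      (isCompact_univ_pi fun _ => isCompact_Icc)
  simp only [hpt]
  rw [integral_finsetSum _ fun j _ => hint j, mul_sum]
  congr! 1 with j
  rw [integral_const_mul, mul_left_comm, boxAverage_prod_cexp]

theorem amplitude_recovery_error_general
    (d k : ℕ) (hk : 1 ≤ k)
    (A ρ R : ℝ) (hR : 0 < R)
    (a : Fin k → ℂ) (ha : ∀ j, ‖a j‖ ≤ A)
    (w : Fin k → Fin d → ℝ)
    (wo : Fin d → ℝ)
    (hwo : Real.sqrt (∑ l, (wo l - w ⟨0, hk⟩ l) ^ 2) ≤ ρ)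
    (B : ℝ)
    (hB : ∀ j : Fin k, j ≠ ⟨0, hk⟩ →
      (∏ l, (if w j l - wo l = 0 then (1:ℝ)
        else min 1 (1 / (Real.pi * R * |w j l - wo l|)))) ≤ B) :
    ‖((R ^ d : ℝ) : ℂ)⁻¹ *
        (∫ t in Set.pi Set.univ (fun _ : Fin d => Set.Icc (0:ℝ) R),
          (∑ j, a j * Complex.exp (2 * Real.pi * Complex.I *
              (∑ l, w j l * t l))) *
            Complex.exp (-(2 * Real.pi * Complex.I) * (∑ l, wo l * t l))) -
      a ⟨0, hk⟩‖ ≤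
    A * (2 * Real.pi * ρ * R * Real.sqrt d + (k - 1) * B) := by
  have hcorr := boxAverage_correlation R a w wo
  rw [Fintype.card_fin] at hcorr
  rw [hcorr]
  have hA : 0 ≤ A := (norm_nonneg _).trans (ha ⟨0, hk⟩)
  have hlead := norm_prod_charAvg_sub_one_le hR (fun l => w ⟨0, hk⟩ l - wo l)
  simp only [Fintype.card_fin, sub_sq_comm (w _ _)] at hlead
  have hrest : ∀ j ≠ ⟨0, hk⟩, ‖∏ l, charAvg R (w j l - wo l)‖ ≤ B := fun j hj => by
    rw [norm_prod]
    exact (prod_le_prod (fun _ _ => norm_nonneg _)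
      fun l _ => norm_charAvg_le_damping hR.le _).trans (hB j hj)
  refine (norm_sum_mul_sub_le a _ _ ha hrest).trans ?_
  rw [Fintype.card_fin]
  calc A * ‖∏ l, charAvg R (w ⟨0, hk⟩ l - wo l) - 1‖ + (k - 1) * (A * B)
      ≤ A * (2 * π * R * √d * ρ) + (k - 1) * (A * B) := by
        gcongr
        exact hlead.trans (by gcongr)
    _ = A * (2 * π * ρ * R * √d + (k - 1) * B) := by ring

/-- Monte Carlo amplitude recovery: correlating the signal against a recovered
frequency `w⁰` close to `w₁` returns `a₁` up to an explicit error. -/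
theorem amplitude_recovery_error
    (d k : ℕ) (hd : 1 ≤ d) (hk : 1 ≤ k)
    (η A ρ R : ℝ) (hη : 0 < η) (hA : 0 < A) (hρ : 0 ≤ ρ) (hR : 0 < R)
    (a : Fin k → ℂ) (ha : ∀ j, ‖a j‖ ≤ A)
    (w : Fin k → Fin d → ℝ)
    (hsep : ∀ i j : Fin k, i ≠ j →
      η < Real.sqrt (∑ l, (w i l - w j l) ^ 2))
    (wo : Fin d → ℝ)
    (hwo : Real.sqrt (∑ l, (wo l - w ⟨0, hk⟩ l) ^ 2) ≤ ρ)
    (B : ℝ)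
    (hB : ∀ j : Fin k, j ≠ ⟨0, hk⟩ →
      (∏ l, (if w j l - wo l = 0 then (1:ℝ)
        else min 1 (1 / (Real.pi * R * |w j l - wo l|)))) ≤ B) :
    ‖((R ^ d : ℝ) : ℂ)⁻¹ *
        (∫ t in Set.pi Set.univ (fun _ : Fin d => Set.Icc (0:ℝ) R),
          (∑ j, a j * Complex.exp (2 * Real.pi * Complex.I *
              (∑ l, w j l * t l))) *
            Complex.exp (-(2 * Real.pi * Complex.I) * (∑ l, wo l * t l))) -
      a ⟨0, hk⟩‖ ≤
    A * (2 * Real.pi * ρ * R * Real.sqrt d + (k - 1) * B) :=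
  amplitude_recovery_error_general d k hk A ρ R hR a ha w wo hwo B hB
end

section
/- Importance-sampled convolution estimator (expectation identity): let $N \ge 2$ be even, let $G : \mathbb{Z} \cap [-N/2, N/2) \to \mathbb{C}$ be any function, and let $t$ be uniform on $(-1/2, 1/2)$. Define $Z(t) = G\left(\lfloor \mathrm{sgn}(t)((N/2+1)^{2|t|} - 1)\rfloor\right) \cdot 2\ln(N/2+1)\,(N/2+1)^{2|t|}$, with $\mathrm{sgn}(t) = 1$ for $t \ge 0$ and $-1$ otherwise. Then $\mathbb{E}[Z(t)] = \sum_{z \in \mathbb{Z} \cap [-N/2, N/2)} G(z)$ (up to the boundary convention identifying the point $z = -N/2$ appropriately), and $|Z(t)| \le 2\ln(N/2+1)(N+2) \sup_z |G(z)| \cdot \mathbf{1}$; moreover if $|G(z)| \le C/\max(1, |z|)$ then $\sup_t |Z(t)| \le C'\ln(N)$ for an absolute constant $C'$. -/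
/-!
With `A = N/2 + 1`, the map `φ t = sgn t · (A^(2|t|) - 1)` is a `C¹` increasing bijection of
`[-1/2, 1/2]` onto `[-N/2, N/2]` with `φ' t = 2 log A · A^(2|t|)`. The estimator is
`Z = φ' · (G ∘ ⌊·⌋ ∘ φ)`, so substituting `u = φ t` turns `∫ Z` into `∫_{-N/2}^{N/2} G ⌊u⌋ du`,
which is the sum of `G` over the grid. For the bounds, `φ' t = 2 log A · (|φ t| + 1)`: this is at
most `2 log A · A`, and at most `6 log A · max 1 |⌊φ t⌋|`, which cancels a decay
`‖G z‖ ≤ C / max 1 |z|`.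
-/

open Finset Complex MeasureTheory intervalIntegral

section Integrals

variable {E : Type*} [NormedAddCommGroup E]

theorem intervalIntegrable_comp_floor (f : ℤ → E) (x y : ℝ) :
    IntervalIntegrable (fun u : ℝ => f ⌊u⌋) volume x y := by
  rw [intervalIntegrable_iff]
  refine Measure.integrableOn_of_bounded (M := ∑ z ∈ Icc ⌊min x y⌋ ⌊max x y⌋, ‖f z‖)
    measure_Ioc_lt_top.ne
    (StronglyMeasurable.of_discrete.comp_measurable Int.measurable_floor).aestronglyMeasurable ?_
  filter_upwards [ae_restrict_mem measurableSet_uIoc] with u hu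
  exact single_le_sum (f := fun z => ‖f z‖) (fun _ _ => norm_nonneg _)
    (mem_Icc.2 ⟨Int.floor_le_floor hu.1.le, Int.floor_le_floor hu.2⟩)

variable [NormedSpace ℝ E]

theorem intervalIntegral_deriv_smul_comp_of_deriv_nonneg {f f' : ℝ → ℝ}
    (hf : ∀ x, HasDerivAt f (f' x) x) (hf' : ∀ x, 0 ≤ f' x) (g : ℝ → E) {a b : ℝ}
    (hab : a ≤ b) : ∫ x in a..b, f' x • g (f x) = ∫ u in f a..f b, g u := by
  rw [integral_of_le hab, integral_of_le (monotone_of_hasDerivAt_nonneg hf hf' hab),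
    ← integral_Icc_eq_integral_Ioc, ← integral_Icc_eq_integral_Ioc]
  exact integral_Icc_deriv_smul_of_deriv_nonneg
    (fun x _ => (hf x).continuousAt.continuousWithinAt) (fun x _ => hf x) (fun x _ => hf' x) hab

variable [CompleteSpace E]

theorem intervalIntegral_comp_floor_unit (f : ℤ → E) (k : ℤ) :
    ∫ u in (k : ℝ)..k + 1, f ⌊u⌋ = f k := by
  rw [integral_of_le (by linarith), integral_Ioc_eq_integral_Ioo,
    setIntegral_congr_fun measurableSet_Ioo (g := fun _ => f k)
      fun u hu => by rw [Int.floor_eq_iff.2 ⟨hu.1.le, hu.2⟩]]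
  simp

theorem intervalIntegral_comp_floor (f : ℤ → E) {a b : ℤ} (hab : a ≤ b) :
    ∫ u in (a : ℝ)..b, f ⌊u⌋ = ∑ z ∈ Ico a b, f z := by
  induction b, hab using Int.leInduction with
  | base => simp
  | succ b hab ih =>
    rw [Int.cast_add, Int.cast_one, ← integral_add_adjacent_intervals
      (intervalIntegrable_comp_floor f _ _) (intervalIntegrable_comp_floor f _ _), ih,
      intervalIntegral_comp_floor_unit, Ico_add_one_right_eq_Icc, ← Ico_insert_right hab,
      sum_insert right_notMem_Ico, add_comm]

end Integrals

/-- The paper's substitution `z = sgn(t) ((N/2 + 1)^(2|t|) - 1)`, with `A = N/2 + 1`. -/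
noncomputable def expSubst (A t : ℝ) : ℝ := (if 0 ≤ t then 1 else -1) * (A ^ (2 * |t|) - 1)

noncomputable def expSubstDeriv (A t : ℝ) : ℝ := 2 * Real.log A * A ^ (2 * |t|)

section ExpSubst

variable {A : ℝ}

theorem expSubst_eq_rpow_sub_rpow (A t : ℝ) :
    expSubst A t = A ^ (2 * max t 0) - A ^ (2 * max (-t) 0) := by
  rcases le_or_gt 0 t with ht | ht
  · simp [expSubst, ht, abs_of_nonneg]
  · simp [expSubst, ht.not_ge, abs_of_neg ht, ht.le]

theorem continuous_expSubst (hA : 0 < A) : Continuous (expSubst A) := by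
  simp_rw [funext (expSubst_eq_rpow_sub_rpow A)]
  exact (continuous_const.rpow (by fun_prop) fun _ => .inl hA.ne').sub
    (continuous_const.rpow (by fun_prop) fun _ => .inl hA.ne')

theorem continuous_expSubstDeriv (hA : 0 < A) : Continuous (expSubstDeriv A) :=
  continuous_const.mul (continuous_const.rpow (continuous_const.mul continuous_abs)
    fun _ => .inl hA.ne')

theorem hasDerivAt_expSubst (hA : 0 < A) (t : ℝ) :
    HasDerivAt (expSubst A) (expSubstDeriv A t) t := by
  -- Both one-sided derivatives at `0` equal `2 log A`, so `expSubst A` is `C¹` across `0`.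
  refine hasDerivAt_of_hasDerivAt_of_ne' (x := 0) (fun y hy => ?_)
    (continuous_expSubst hA).continuousAt (continuous_expSubstDeriv hA).continuousAt t
  rcases hy.lt_or_gt with hy | hy
  · have hloc : expSubst A =ᶠ[nhds y] fun t => -(A ^ (2 * -t) - 1) := by
      filter_upwards [eventually_lt_nhds hy] with t ht
      simp [expSubst, ht.not_ge, abs_of_neg ht]
    refine ((((hasDerivAt_neg y).const_mul 2).const_rpow hA).sub_const 1).neg
      |>.congr_of_eventuallyEq hloc |>.congr_deriv ?_
    rw [expSubstDeriv, abs_of_neg hy]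
    ring
  · have hloc : expSubst A =ᶠ[nhds y] fun t => A ^ (2 * t) - 1 := by
      filter_upwards [eventually_gt_nhds hy] with t ht
      simp [expSubst, ht.le, abs_of_pos ht]
    refine (((hasDerivAt_id y).const_mul 2).const_rpow hA).sub_const 1
      |>.congr_of_eventuallyEq hloc |>.congr_deriv ?_
    rw [expSubstDeriv, abs_of_pos hy, id]
    ring

theorem expSubstDeriv_nonneg (hA : 1 ≤ A) (t : ℝ) : 0 ≤ expSubstDeriv A t := by
  have := Real.log_nonneg hA
  unfold expSubstDeriv; positivity

theorem expSubstDeriv_le (hA : 1 ≤ A) {t : ℝ} (ht : |t| ≤ 1 / 2) :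
    expSubstDeriv A t ≤ 2 * Real.log A * A := by
  have := Real.log_nonneg hA
  unfold expSubstDeriv
  gcongr
  exact Real.rpow_le_self_of_one_le hA (by linarith)

theorem abs_expSubst_add_one (hA : 1 ≤ A) (t : ℝ) : |expSubst A t| + 1 = A ^ (2 * |t|) := by
  have := Real.one_le_rpow hA (by positivity : 0 ≤ 2 * |t|)
  unfold expSubst
  split_ifs <;> simp [abs_sub_comm 1 (A ^ (2 * |t|)), abs_of_nonneg (sub_nonneg.2 this)]

theorem expSubst_half (A : ℝ) : expSubst A (1 / 2) = A - 1 := by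
  norm_num [expSubst]

theorem expSubst_neg_half (A : ℝ) : expSubst A (-1 / 2) = -(A - 1) := by
  norm_num [expSubst]

end ExpSubst

theorem abs_add_one_le_three_mul_max_one_abs_floor (x : ℝ) :
    |x| + 1 ≤ 3 * max 1 |(⌊x⌋ : ℝ)| := by
  have h1 := Int.floor_le x
  have h2 := Int.lt_floor_add_one x
  rcases le_or_gt 1 x with hx | hx
  · have : (1 : ℝ) ≤ ⌊x⌋ := by exact_mod_cast Int.le_floor.2 (by exact_mod_cast hx)
    rw [abs_of_nonneg (by linarith), abs_of_nonneg (by linarith), max_eq_right this]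
    linarith
  · rcases le_or_gt 0 x with hx0 | hx0
    · rw [abs_of_nonneg hx0]
      linarith [le_max_left 1 |(⌊x⌋ : ℝ)|]
    · rw [abs_of_neg hx0, abs_of_neg (by linarith)]
      linarith [le_max_left 1 (-(⌊x⌋ : ℝ)), le_max_right 1 (-(⌊x⌋ : ℝ))]

section Estimator

variable {E : Type*} [NormedAddCommGroup E] [NormedSpace ℝ E]

noncomputable def importanceEstimator (G : ℤ → E) (A t : ℝ) : E :=
  expSubstDeriv A t • G ⌊expSubst A t⌋

theorem integral_importanceEstimator [CompleteSpace E] (G : ℤ → E) (m : ℕ) :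
    ∫ t in (-1 / 2 : ℝ)..(1 / 2), importanceEstimator G (m + 1) t =
      ∑ z ∈ Ico (-(m : ℤ)) m, G z := by
  have hA : (1 : ℝ) ≤ m + 1 := by linarith [m.cast_nonneg (α := ℝ)]
  unfold importanceEstimator
  rw [intervalIntegral_deriv_smul_comp_of_deriv_nonneg
    (hasDerivAt_expSubst (by linarith)) (expSubstDeriv_nonneg hA) (fun u => G ⌊u⌋) (by norm_num),
    expSubst_half, expSubst_neg_half, add_sub_cancel_right]
  exact_mod_cast intervalIntegral_comp_floor G (by omega : -(m : ℤ) ≤ m)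

theorem norm_importanceEstimator {A : ℝ} (hA : 1 ≤ A) (G : ℤ → E) (t : ℝ) :
    ‖importanceEstimator G A t‖ = expSubstDeriv A t * ‖G ⌊expSubst A t⌋‖ := by
  rw [importanceEstimator, norm_smul, Real.norm_of_nonneg (expSubstDeriv_nonneg hA t)]

theorem norm_importanceEstimator_le {A M : ℝ} (hA : 1 ≤ A) {G : ℤ → E} (hG : ∀ z, ‖G z‖ ≤ M)
    {t : ℝ} (ht : |t| ≤ 1 / 2) : ‖importanceEstimator G A t‖ ≤ 2 * Real.log A * A * M := by
  rw [norm_importanceEstimator hA]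
  exact mul_le_mul (expSubstDeriv_le hA ht) (hG _) (norm_nonneg _)
    (by have := Real.log_nonneg hA; positivity)

theorem norm_importanceEstimator_le_of_decay {A C : ℝ} (hA : 1 ≤ A) {G : ℤ → E}
    (hG : ∀ z : ℤ, ‖G z‖ ≤ C / max 1 |(z : ℝ)|) (t : ℝ) :
    ‖importanceEstimator G A t‖ ≤ 6 * C * Real.log A := by
  set z := ⌊expSubst A t⌋
  have hM : 0 < max 1 |(z : ℝ)| := lt_max_of_lt_left one_pos
  have hlog := Real.log_nonneg hA
  have hweight : A ^ (2 * |t|) ≤ 3 * max 1 |(z : ℝ)| :=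
    abs_expSubst_add_one hA t ▸ abs_add_one_le_three_mul_max_one_abs_floor _
  calc ‖importanceEstimator G A t‖ = 2 * Real.log A * (A ^ (2 * |t|) * ‖G z‖) := by
        rw [norm_importanceEstimator hA, expSubstDeriv, mul_assoc]
    _ ≤ 2 * Real.log A * (3 * max 1 |(z : ℝ)| * (C / max 1 |(z : ℝ)|)) := by
        gcongr
        exact hG z
    _ = 6 * C * Real.log A := by field_simp; ring

end Estimator

/-- Importance-sampled convolution estimator: a uniform `t ∈ (-1/2, 1/2)`
gives an unbiased estimator of the full grid sum, the estimator is bounded by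
`2 ln(N/2+1)(N+2) sup|G|`, and when `G` decays like `1/max(1,|z|)` the
estimator is uniformly `O(ln N)`. -/
theorem importance_sampling_estimator :
    ∃ C' : ℝ, 0 < C' ∧
      ∀ (N : ℕ), 2 ≤ N → Even N → ∀ (G : ℤ → ℂ),
      let Z : ℝ → ℂ := fun t =>
        G ⌊(if 0 ≤ t then (1:ℝ) else -1) *
            (((N : ℝ) / 2 + 1) ^ (2 * |t|) - 1)⌋ *
          ((2 * Real.log ((N : ℝ) / 2 + 1) *
            ((N : ℝ) / 2 + 1) ^ (2 * |t|) : ℝ) : ℂ)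
      ((∫ t in (-(1:ℝ)/2)..(1/2), Z t) =
          ∑ z ∈ Finset.Icc (-(N : ℤ) / 2) ((N : ℤ) / 2 - 1), G z) ∧
      (∀ Mg : ℝ, (∀ z : ℤ, ‖G z‖ ≤ Mg) →
        ∀ t ∈ Set.Ioo (-(1:ℝ)/2) (1/2),
          ‖Z t‖ ≤ 2 * Real.log ((N : ℝ) / 2 + 1) * ((N : ℝ) + 2) * Mg) ∧
      (∀ Cg : ℝ, 0 ≤ Cg → (∀ z : ℤ, ‖G z‖ ≤ Cg / max 1 |(z : ℝ)|) →
        ∀ t ∈ Set.Ioo (-(1:ℝ)/2) (1/2),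
          ‖Z t‖ ≤ C' * Cg * Real.log N) := by
  refine ⟨6, by norm_num, fun N hN hNe G => ?_⟩
  intro Z
  have hZ : Z = importanceEstimator G ((N : ℝ) / 2 + 1) := funext fun t => by
    rw [importanceEstimator, Complex.real_smul, mul_comm]; rfl
  have hN' : (2 : ℝ) ≤ N := by exact_mod_cast hN
  have hA : (1 : ℝ) ≤ (N : ℝ) / 2 + 1 := by linarith
  have hlog := Real.log_nonneg hA
  rw [hZ]
  refine ⟨?_, fun Mg hG t ht => ?_, fun Cg hCg hG t _ => ?_⟩
  · obtain ⟨m, rfl⟩ := hNe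
    have hAm : ((m + m : ℕ) : ℝ) / 2 + 1 = m + 1 := by push_cast; ring
    have hIcc : Icc (-((m + m : ℕ) : ℤ) / 2) ((m + m : ℕ) / 2 - 1) = Ico (-(m : ℤ)) m := by
      ext; simp only [mem_Icc, mem_Ico]; omega
    rw [hAm, hIcc, integral_importanceEstimator]
  · have hMg : 0 ≤ Mg := (norm_nonneg _).trans (hG 0)
    calc ‖importanceEstimator G _ t‖ ≤ 2 * Real.log ((N : ℝ) / 2 + 1) * ((N : ℝ) / 2 + 1) * Mg :=
          norm_importanceEstimator_le hA hG (abs_le.2 ⟨by linarith [ht.1], ht.2.le⟩)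
      _ ≤ _ := by gcongr <;> linarith
  · calc ‖importanceEstimator G _ t‖ ≤ 6 * Cg * Real.log ((N : ℝ) / 2 + 1) :=
          norm_importanceEstimator_le_of_decay hA hG t
      _ ≤ _ := by gcongr; linarith
end
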